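/- arXiv:2110.13896 — 2 statements merged into one kernel-verified Lean document; each statement's English description precedes it below -/
import Mathlib

section
/- Define Γ : ℍ \ {i} → ℝ/2πℤ by: Γ(x+iy) = 0 if x=0, y>1; Γ = π if x=0, y<1; Γ = 3π/2 if x²+y²=1, x>0; Γ = π/2 if x²+y²=1, x<0; Γ = π - arctan(2x/(x²+y²-1)) if x²+y²<1; Γ = -arctan(2x/(x²+y²-1)) if x²+y²>1. Then for every x+iy ∈ ℍ with x+iy ≠ i, exp(i·Γ(x+iy)) = (x²+y²-1 - i·2x)/√(4x² + (x²+y²-1)²). -/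
open Real

/-- The angle function `Γ` at the point `i`, as a real-valued representative of the
circle-valued function `Γ : ℍ \ {i} → ℝ/2πℤ` of the paper, written in the coordinates
`x + iy`. -/
noncomputable def Gamma (x y : ℝ) : ℝ :=
  if x = 0 ∧ 1 < y then 0
  else if x = 0 ∧ y < 1 then π
  else if x ^ 2 + y ^ 2 = 1 ∧ 0 < x then 3 * π / 2
  else if x ^ 2 + y ^ 2 = 1 ∧ x < 0 then π / 2
  else if x ^ 2 + y ^ 2 < 1 then π - Real.arctan (2 * x / (x ^ 2 + y ^ 2 - 1))
  else -Real.arctan (2 * x / (x ^ 2 + y ^ 2 - 1))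

/-!
`Γ(x+iy)` is an argument of `(x²+y²-1) - 2x·i`. Off the unit circle this number has nonzero
real part `a`, and `arctan (b / a)` is an argument of `a + b·i` when `a > 0`, of `-(a + b·i)`
when `a < 0`; the branches `x = 0` of `Γ` are the values of these formulas at `b = 0`. On the
unit circle the number is `-2x·i`, with argument `∓π/2`.
-/

namespace Complex

theorem exp_arctan_div_mul_I {a : ℝ} (ha : 0 < a) (b : ℝ) :
    cexp (Real.arctan (b / a) * I) = (a + b * I) / (√(a ^ 2 + b ^ 2) : ℝ) := by
  have hsqrt : √(a ^ 2 + b ^ 2) = a * √(1 + (b / a) ^ 2) := by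
    rw [← sqrt_sq ha.le, ← sqrt_mul (sq_nonneg a), sqrt_sq ha.le]
    congr 1
    field_simp
  have hsqrt_ne : (√(1 + (b / a) ^ 2) : ℂ) ≠ 0 := ofReal_ne_zero.2 (sqrt_pos.2 (by positivity)).ne'
  have ha' : (a : ℂ) ≠ 0 := ofReal_ne_zero.2 ha.ne'
  rw [exp_mul_I, ← ofReal_cos, ← ofReal_sin, cos_arctan, sin_arctan, hsqrt]
  push_cast
  field_simp

theorem exp_neg_arctan_div_mul_I {a : ℝ} (ha : 0 < a) (b : ℝ) :
    cexp ((-Real.arctan (b / a) : ℝ) * I) = (a - b * I) / (√(a ^ 2 + b ^ 2) : ℝ) := by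
  rw [← arctan_neg, ← neg_div, exp_arctan_div_mul_I ha, neg_sq]
  push_cast
  ring

theorem exp_pi_sub_arctan_div_mul_I {a : ℝ} (ha : a < 0) (b : ℝ) :
    cexp ((π - Real.arctan (b / a) : ℝ) * I) = (a - b * I) / (√(a ^ 2 + b ^ 2) : ℝ) := by
  rw [← neg_neg a, div_neg, arctan_neg, sub_neg_eq_add, ofReal_add, add_mul, Complex.exp_add,
    exp_pi_mul_I, exp_arctan_div_mul_I (neg_pos.2 ha), neg_sq (-a)]
  push_cast
  ring

end Complex

theorem Gamma_of_lt_one {x y : ℝ} (h : x ^ 2 + y ^ 2 < 1) :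
    Gamma x y = π - arctan (2 * x / (x ^ 2 + y ^ 2 - 1)) := by
  unfold _root_.Gamma
  split_ifs with h₀ h₁ h₂ h₃
  · obtain ⟨rfl, hy₁⟩ := h₀
    nlinarith
  · simp [h₁.1]
  · linarith [h₂.1]
  · linarith [h₃.1]
  · rfl

theorem Gamma_of_one_lt {x y : ℝ} (hy : 0 < y) (h : 1 < x ^ 2 + y ^ 2) :
    Gamma x y = -arctan (2 * x / (x ^ 2 + y ^ 2 - 1)) := by
  unfold _root_.Gamma
  split_ifs with h₀ h₁ h₂ h₃
  · simp [h₀.1]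
  · obtain ⟨rfl, hy₁⟩ := h₁
    nlinarith
  · linarith [h₂.1]
  · linarith [h₃.1]
  · linarith
  · rfl

theorem Gamma_of_eq_one_of_pos {x y : ℝ} (h : x ^ 2 + y ^ 2 = 1) (hx : 0 < x) :
    Gamma x y = 3 * π / 2 := by
  simp [_root_.Gamma, h, hx, hx.ne']

theorem Gamma_of_eq_one_of_neg {x y : ℝ} (h : x ^ 2 + y ^ 2 = 1) (hx : x < 0) :
    Gamma x y = π / 2 := by
  simp [_root_.Gamma, h, hx, hx.ne, hx.not_gt]

open Complex in
theorem exp_Gamma_mul_I_of_eq_one {x y : ℝ} (h : x ^ 2 + y ^ 2 = 1) (hx : x ≠ 0) :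
    cexp (Gamma x y * I) = -(2 * x * I) / (√((2 * x) ^ 2) : ℝ) := by
  have hx' : (x : ℂ) ≠ 0 := ofReal_ne_zero.2 hx
  rw [sqrt_sq_eq_abs]
  rcases hx.lt_or_gt with hneg | hpos
  · rw [Gamma_of_eq_one_of_neg h hneg, abs_of_neg (by linarith), ofReal_div, ofReal_ofNat,
      exp_pi_div_two_mul_I]
    push_cast
    field_simp
  · rw [Gamma_of_eq_one_of_pos h hpos, abs_of_pos (by linarith),
      show ((3 * π / 2 : ℝ) : ℂ) * I = π * I + π / 2 * I by push_cast; ring,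
      Complex.exp_add, exp_pi_mul_I, exp_pi_div_two_mul_I]
    push_cast
    field_simp

/-- For every `x + iy` in the upper half-plane with `x + iy ≠ i`,
`exp(i·Γ(x+iy)) = (x²+y²-1 - i·2x)/√(4x² + (x²+y²-1)²)`. -/
theorem exp_I_Gamma (x y : ℝ) (hy : 0 < y) (h : (x, y) ≠ (0, 1)) :
    Complex.exp ((Gamma x y : ℂ) * Complex.I) =
      (((x ^ 2 + y ^ 2 - 1 : ℝ) : ℂ) - 2 * (x : ℂ) * Complex.I) /
        ((Real.sqrt (4 * x ^ 2 + (x ^ 2 + y ^ 2 - 1) ^ 2) : ℝ) : ℂ) := by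
  rw [show 4 * x ^ 2 + (x ^ 2 + y ^ 2 - 1) ^ 2 = (x ^ 2 + y ^ 2 - 1) ^ 2 + (2 * x) ^ 2 by ring]
  rcases lt_trichotomy (x ^ 2 + y ^ 2) 1 with hlt | heq | hgt
  · rw [Gamma_of_lt_one hlt, Complex.exp_pi_sub_arctan_div_mul_I (by linarith)]
    push_cast
    ring
  · have hx : x ≠ 0 := by
      rintro rfl
      exact h (by simp only [Prod.mk.injEq, true_and]; nlinarith)
    rw [exp_Gamma_mul_I_of_eq_one heq hx, sub_eq_zero.2 heq, zero_pow two_ne_zero, zero_add]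
    push_cast
    ring
  · rw [Gamma_of_one_lt hy hgt, Complex.exp_neg_arctan_div_mul_I (by linarith)]
    push_cast
    ring
end

section
/- The function Γ : ℍ \ {i} → ℝ/2πℤ (defined case-wise as in the previous statement) is continuously differentiable; in particular its partial derivatives on the open regions {x²+y²<1} and {x²+y²>1} are ∂Γ/∂x = 2(x²-y²+1)/(4x²+(x²+y²-1)²) and ∂Γ/∂y = 4xy/(4x²+(x²+y²-1)²), and these expressions extend continuously to ℍ \ {i}. -/
open Real

/-!
With `z = x + iy`, `Γ(z)` is an argument of `w(z) = (z - i) * conj (z + i) = (x² + y² - 1) - 2ix`,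
a positive multiple of the Cayley transform `(z - i) / (z + i)`. Hence `exp (iΓ) = w / |w|`, which
is smooth wherever `w ≠ 0`, that is away from `±i`. Off the unit circle `Γ` is locally a constant
minus `arctan (2x / (x² + y² - 1))`, whose partial derivatives have denominator
`|w|² = 4x² + (x² + y² - 1)²`.
-/

open Filter Topology

theorem contDiffAt_div_norm {n : WithTop ℕ∞} {z : ℂ} (hz : z ≠ 0) :
    ContDiffAt ℝ n (fun w : ℂ => w / ‖w‖) z := by
  have hn : ContDiffAt ℝ n (fun w : ℂ => (‖w‖⁻¹ : ℝ) • w) z :=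
    ((contDiffAt_norm ℝ hz).inv (norm_ne_zero_iff.2 hz)).smul contDiffAt_id
  refine hn.congr_of_eventuallyEq (Eventually.of_forall fun w => ?_)
  simp [Complex.real_smul, div_eq_inv_mul]

theorem exp_arctan_div_mul_I {a b : ℝ} (ha : 0 < a) :
    Complex.exp (arctan (b / a) * Complex.I) = ⟨a, b⟩ / ‖(⟨a, b⟩ : ℂ)‖ := by
  have hn : 0 < ‖(⟨a, b⟩ : ℂ)‖ := norm_pos_iff.2 fun h => ha.ne' (congrArg Complex.re h)
  have hs : √(1 + (b / a) ^ 2) = ‖(⟨a, b⟩ : ℂ)‖ / a := by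
    rw [← Real.sqrt_sq (div_pos hn ha).le]
    congr 1
    rw [div_pow (‖_‖), Complex.sq_norm, Complex.normSq_mk]
    field_simp
  apply Complex.ext <;>
    simp only [Complex.exp_ofReal_mul_I_re, Complex.exp_ofReal_mul_I_im, Complex.div_ofReal_re,
      Complex.div_ofReal_im, Real.cos_arctan, Real.sin_arctan, hs] <;> field_simp

theorem exp_pi_add_arctan_div_mul_I {a b : ℝ} (ha : a < 0) :
    Complex.exp (((π + arctan (b / a) : ℝ) : ℂ) * Complex.I) = ⟨a, b⟩ / ‖(⟨a, b⟩ : ℂ)‖ := by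
  have hneg : (⟨a, b⟩ : ℂ) = -⟨-a, -b⟩ := by apply Complex.ext <;> simp
  rw [← neg_div_neg_eq b a, Complex.ofReal_add, add_mul, Complex.exp_add, Complex.exp_pi_mul_I,
    exp_arctan_div_mul_I (neg_pos.2 ha), hneg, norm_neg, neg_div, neg_one_mul]

def cayleyNum (x y : ℝ) : ℂ := ⟨x ^ 2 + y ^ 2 - 1, -2 * x⟩

theorem contDiff_cayleyNum {n : WithTop ℕ∞} :
    ContDiff ℝ n (fun p : ℝ × ℝ => cayleyNum p.1 p.2) :=
  Complex.equivRealProdCLM.symm.contDiff.comp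
    (f := fun p : ℝ × ℝ => (p.1 ^ 2 + p.2 ^ 2 - 1, -2 * p.1)) (by fun_prop)

section Gamma

variable {x y : ℝ}

theorem Gamma_of_sq_add_sq_lt_one (h : x ^ 2 + y ^ 2 < 1) :
    Gamma x y = π - arctan (2 * x / (x ^ 2 + y ^ 2 - 1)) := by
  unfold _root_.Gamma
  split_ifs with h₁ h₂ h₃ h₄
  · nlinarith [h₁.2]
  · simp [h₂.1]
  · linarith [h₃.1]
  · linarith [h₄.1]
  · rfl

theorem Gamma_of_one_lt_sq_add_sq (hy : 0 < y) (h : 1 < x ^ 2 + y ^ 2) :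
    Gamma x y = -arctan (2 * x / (x ^ 2 + y ^ 2 - 1)) := by
  unfold _root_.Gamma
  split_ifs with h₁ h₂ h₃ h₄ h₅
  · simp [h₁.1]
  · obtain ⟨rfl, hy₁⟩ := h₂
    nlinarith
  · linarith [h₃.1]
  · linarith [h₄.1]
  · linarith
  · rfl

theorem Gamma_of_sq_add_sq_eq_one_of_pos (h : x ^ 2 + y ^ 2 = 1) (hx : 0 < x) :
    Gamma x y = 3 * π / 2 := by
  simp [_root_.Gamma, h, hx, hx.ne']

theorem Gamma_of_sq_add_sq_eq_one_of_neg (h : x ^ 2 + y ^ 2 = 1) (hx : x < 0) :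
    Gamma x y = π / 2 := by
  simp [_root_.Gamma, h, hx, hx.ne, hx.not_gt]

theorem cayleyNum_ne_zero (hy : 0 < y) (hi : (x, y) ≠ (0, 1)) : cayleyNum x y ≠ 0 := by
  intro h
  have hx : x = 0 := by simpa [cayleyNum] using congrArg Complex.im h
  have hxy : x ^ 2 + y ^ 2 - 1 = 0 := congrArg Complex.re h
  subst hx
  exact hi (by simp; nlinarith)

theorem normSq_cayleyNum :
    Complex.normSq (cayleyNum x y) = 4 * x ^ 2 + (x ^ 2 + y ^ 2 - 1) ^ 2 := by
  rw [cayleyNum, Complex.normSq_mk]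
  ring

theorem exp_Gamma_mul_I (hy : 0 < y) (hi : (x, y) ≠ (0, 1)) :
    Complex.exp (Gamma x y * Complex.I) = cayleyNum x y / ‖cayleyNum x y‖ := by
  rcases lt_trichotomy (x ^ 2 + y ^ 2) 1 with h | h | h
  · rw [Gamma_of_sq_add_sq_lt_one h, sub_eq_add_neg, ← arctan_neg, ← neg_div, ← neg_mul]
    exact exp_pi_add_arctan_div_mul_I (by linarith)
  · have hx : x ≠ 0 := by
      rintro rfl
      exact hi (by simp; nlinarith)
    have hw : cayleyNum x y = (-2 * x : ℝ) * Complex.I := by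
      apply Complex.ext <;> simp [cayleyNum, h]
    rw [hw, norm_mul, Complex.norm_I, mul_one, Complex.norm_real, Real.norm_eq_abs]
    rcases hx.lt_or_gt with hx | hx
    · rw [Gamma_of_sq_add_sq_eq_one_of_neg h hx, abs_of_pos (by linarith),
        mul_div_cancel_left₀ _ (Complex.ofReal_ne_zero.2 (by simpa using hx.ne)),
        Complex.ofReal_div, Complex.ofReal_ofNat, Complex.exp_pi_div_two_mul_I]
    · rw [Gamma_of_sq_add_sq_eq_one_of_pos h hx, abs_of_neg (by linarith), Complex.ofReal_neg,
        div_neg, mul_div_cancel_left₀ _ (Complex.ofReal_ne_zero.2 (by simpa using hx.ne')),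
        show (3 * π / 2 : ℝ) = π + π / 2 by ring, Complex.ofReal_add, add_mul, Complex.exp_add,
        Complex.exp_pi_mul_I, Complex.ofReal_div, Complex.ofReal_ofNat,
        Complex.exp_pi_div_two_mul_I, neg_one_mul]
  · rw [Gamma_of_one_lt_sq_add_sq hy h, ← arctan_neg, ← neg_div, ← neg_mul]
    exact exp_arctan_div_mul_I (by linarith)

theorem hasDerivAt_arctan_fst (h : x ^ 2 + y ^ 2 ≠ 1) :
    HasDerivAt (fun t => arctan (2 * t / (t ^ 2 + y ^ 2 - 1)))
      (-(2 * (x ^ 2 - y ^ 2 + 1) / (4 * x ^ 2 + (x ^ 2 + y ^ 2 - 1) ^ 2))) x := by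
  have ha : x ^ 2 + y ^ 2 - 1 ≠ 0 := sub_ne_zero.2 h
  have hq := ((hasDerivAt_id' x).const_mul 2).fun_div
    (((hasDerivAt_pow 2 x).add_const (y ^ 2)).sub_const 1) ha
  convert hq.arctan using 1
  field_simp
  ring

theorem hasDerivAt_arctan_snd (h : x ^ 2 + y ^ 2 ≠ 1) :
    HasDerivAt (fun t => arctan (2 * x / (x ^ 2 + t ^ 2 - 1)))
      (-(4 * x * y / (4 * x ^ 2 + (x ^ 2 + y ^ 2 - 1) ^ 2))) y := by
  have ha : x ^ 2 + y ^ 2 - 1 ≠ 0 := sub_ne_zero.2 h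
  have hq := (hasDerivAt_const y (2 * x)).fun_div
    (((hasDerivAt_pow 2 y).const_add (x ^ 2)).sub_const 1) ha
  convert hq.arctan using 1
  field_simp
  ring

theorem Gamma_eventuallyEq (hy : 0 < y) (h : x ^ 2 + y ^ 2 ≠ 1) :
    ∃ c : ℝ, (fun p : ℝ × ℝ => Gamma p.1 p.2) =ᶠ[𝓝 (x, y)]
      fun p => c - arctan (2 * p.1 / (p.1 ^ 2 + p.2 ^ 2 - 1)) := by
  rcases h.lt_or_gt with h | h
  · refine ⟨π, ?_⟩
    have hU : ∀ᶠ p : ℝ × ℝ in 𝓝 (x, y), p.1 ^ 2 + p.2 ^ 2 < 1 :=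
      ContinuousAt.eventually_lt (by fun_prop) (by fun_prop) h
    filter_upwards [hU] with p hp using Gamma_of_sq_add_sq_lt_one hp
  · refine ⟨0, ?_⟩
    have hU : ∀ᶠ p : ℝ × ℝ in 𝓝 (x, y), 0 < p.2 ∧ 1 < p.1 ^ 2 + p.2 ^ 2 :=
      (ContinuousAt.eventually_lt (by fun_prop) (by fun_prop) hy).and
        (ContinuousAt.eventually_lt (by fun_prop) (by fun_prop) h)
    filter_upwards [hU] with p hp
    rw [zero_sub, Gamma_of_one_lt_sq_add_sq hp.1 hp.2]

theorem hasDerivAt_Gamma_fst (hy : 0 < y) (h : x ^ 2 + y ^ 2 ≠ 1) :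
    HasDerivAt (fun t => Gamma t y)
      (2 * (x ^ 2 - y ^ 2 + 1) / (4 * x ^ 2 + (x ^ 2 + y ^ 2 - 1) ^ 2)) x := by
  obtain ⟨c, hc⟩ := Gamma_eventuallyEq hy h
  have hline : Tendsto (fun t => (t, y)) (𝓝 x) (𝓝 (x, y)) := (Continuous.prodMk_left y).tendsto x
  rw [← neg_neg (2 * _ / _)]
  exact ((hasDerivAt_arctan_fst h).const_sub c).congr_of_eventuallyEq (hc.comp_tendsto hline)

theorem hasDerivAt_Gamma_snd (hy : 0 < y) (h : x ^ 2 + y ^ 2 ≠ 1) :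
    HasDerivAt (fun t => Gamma x t)
      (4 * x * y / (4 * x ^ 2 + (x ^ 2 + y ^ 2 - 1) ^ 2)) y := by
  obtain ⟨c, hc⟩ := Gamma_eventuallyEq hy h
  have hline : Tendsto (fun t => (x, t)) (𝓝 y) (𝓝 (x, y)) := (Continuous.prodMk_right x).tendsto y
  rw [← neg_neg (4 * x * y / _)]
  exact ((hasDerivAt_arctan_snd h).const_sub c).congr_of_eventuallyEq (hc.comp_tendsto hline)

end Gamma

/-- The function `Γ : ℍ \ {i} → ℝ/2πℤ` is continuously differentiable (formally: the
circle-valued map `exp(i·Γ)` is `C¹` on `ℍ \ {i}`); on the open regions `{x²+y²<1}` and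
`{x²+y²>1}` its partial derivatives are `∂Γ/∂x = 2(x²-y²+1)/(4x²+(x²+y²-1)²)` and
`∂Γ/∂y = 4xy/(4x²+(x²+y²-1)²)`, and these expressions extend continuously to `ℍ \ {i}`. -/
theorem Gamma_contDiff :
    ContDiffOn ℝ 1 (fun p : ℝ × ℝ => Complex.exp ((Gamma p.1 p.2 : ℂ) * Complex.I))
      {p : ℝ × ℝ | 0 < p.2 ∧ p ≠ (0, 1)} ∧
    (∀ x y : ℝ, 0 < y → x ^ 2 + y ^ 2 ≠ 1 →
      HasDerivAt (fun t => Gamma t y)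
        (2 * (x ^ 2 - y ^ 2 + 1) / (4 * x ^ 2 + (x ^ 2 + y ^ 2 - 1) ^ 2)) x ∧
      HasDerivAt (fun t => Gamma x t)
        (4 * x * y / (4 * x ^ 2 + (x ^ 2 + y ^ 2 - 1) ^ 2)) y) ∧
    ContinuousOn
      (fun p : ℝ × ℝ => 2 * (p.1 ^ 2 - p.2 ^ 2 + 1) / (4 * p.1 ^ 2 + (p.1 ^ 2 + p.2 ^ 2 - 1) ^ 2))
      {p : ℝ × ℝ | 0 < p.2 ∧ p ≠ (0, 1)} ∧
    ContinuousOn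
      (fun p : ℝ × ℝ => 4 * p.1 * p.2 / (4 * p.1 ^ 2 + (p.1 ^ 2 + p.2 ^ 2 - 1) ^ 2))
      {p : ℝ × ℝ | 0 < p.2 ∧ p ≠ (0, 1)} := by
  have hD : ∀ p ∈ {p : ℝ × ℝ | 0 < p.2 ∧ p ≠ (0, 1)},
      4 * p.1 ^ 2 + (p.1 ^ 2 + p.2 ^ 2 - 1) ^ 2 ≠ 0 := fun p hp => by
    rw [← normSq_cayleyNum]
    exact (Complex.normSq_pos.2 (cayleyNum_ne_zero hp.1 hp.2)).ne'
  refine ⟨?_, fun x y hy h => ⟨hasDerivAt_Gamma_fst hy h, hasDerivAt_Gamma_snd hy h⟩,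
    ContinuousOn.div (by fun_prop) (by fun_prop) hD, ContinuousOn.div (by fun_prop) (by fun_prop) hD⟩
  refine ContDiffOn.congr (fun p hp => ?_) (fun p hp => exp_Gamma_mul_I hp.1 hp.2)
  exact ((contDiffAt_div_norm (cayleyNum_ne_zero hp.1 hp.2)).comp p
    contDiff_cayleyNum.contDiffAt).contDiffWithinAt
end
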